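/- For the Laguerre Unitary Ensemble with parameter b and dimension n, the negative moments satisfy M(-k,n) = (1/k)·∑_{j=0}^{n-1} C(k+j,k-1)·C(k+j-1,k-1)·(b+n)_{(-k-j)}/(n+1)_{(-j-1)} for every positive integer k < n+1 (assuming b > k so the integral converges). -/

import Mathlib

open Polynomial Finset MeasureTheory Real
open scoped Nat

/-!
Integrals `∫₀^∞ x^a e^{-x} p(x) dx` of polynomials are computed coefficientwise from
`∫₀^∞ x^(a+i) e^{-x} dx = Γ(a+i+1)`. For the explicit monic Laguerre polynomial `L^a_n` this turns
`∫ x^a e^{-x} L^a_n(x) x^r dx` into `Γ(a+n+1)` times an `n`-th forward difference of the degree-`r`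
polynomial `i ↦ (a+i+1)^(r)` (rising factorial), so `L^a` is orthogonal, and by positivity of the
integral any monic family orthogonal for the weight `x^b e^{-x}` is `L^b`.

The factor `x^(-k)` moves the weight to `x^(b-k)`. Expanding `L^b_j` in the orthogonal basis
`L^(b-k)_i`, with coefficients `(-1)^(j-i) C(j,i) (k)^(j-i)` (Chu–Vandermonde for rising
factorials), gives `M(-k,n)` as a double sum of Gamma values. Both it and the closed form grow from
`n` to `n + 1` by the same amount: after clearing `n!/Γ(b+n+1)` this is a telescoping identity
driven by the recurrences of `C(k+j-1,k-1)` in `j` and of `Γ(b-k+m+1)/m!` in `m`.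
-/

/-- The left side is the `n`-th forward difference of `P.eval` at `0`. -/
theorem sum_alternating_choose_mul_eval {R : Type*} [CommRing R] {P : R[X]} (hP : P.Monic)
    {n : ℕ} (hn : P.natDegree ≤ n) :
    ∑ i ∈ range (n + 1), (-1) ^ (n - i) * n.choose i * P.eval (i : R) =
      if P.natDegree = n then (n ! : R) else 0 := by
  have hsum := fwdDiff_iter_eq_sum_shift (1 : R) P.eval n 0
  simp only [zero_add, nsmul_one, zsmul_eq_mul, Int.cast_mul, Int.cast_pow, Int.cast_neg,
    Int.cast_one, Int.cast_natCast] at hsum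
  rw [← hsum]
  split_ifs with h
  · subst h
    rw [fwdDiff_iter_degree_eq_factorial, hP.leadingCoeff, one_smul, Pi.natCast_apply]
  · rw [fwdDiff_iter_eq_zero_of_degree_lt (lt_of_le_of_ne hn h), Pi.zero_apply]

theorem ascPochhammer_eval_add {R : Type*} [CommSemiring R] (x y : R) (n : ℕ) :
    (ascPochhammer R n).eval (x + y) = ∑ ij ∈ antidiagonal n,
      n.choose ij.1 * ((ascPochhammer R ij.1).eval x * (ascPochhammer R ij.2).eval y) := by
  induction n with
  | zero => simp
  | succ n ih =>
    rw [sum_antidiagonal_choose_succ_mul (fun i j => (ascPochhammer R i).eval x *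
      (ascPochhammer R j).eval y), ascPochhammer_succ_eval, ih, sum_mul, ← sum_add_distrib]
    refine sum_congr rfl fun ij hij => ?_
    rw [HasAntidiagonal.mem_antidiagonal] at hij
    rw [← Nat.choose_symm_of_eq_add hij.symm, ascPochhammer_succ_eval, ascPochhammer_succ_eval,
      ← hij, Nat.cast_add]
    ring

theorem Real.Gamma_add_nat_eq_mul_ascPochhammer {z : ℝ} (hz : 0 < z) (n : ℕ) :
    Gamma (z + n) = Gamma z * (ascPochhammer ℝ n).eval z := by
  induction n with
  | zero => simp
  | succ n ih =>
    rw [Nat.cast_succ, ← add_assoc, Gamma_add_one (by positivity), ih, ascPochhammer_succ_eval]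
    ring

theorem Real.Gamma_succ_div_factorial {a : ℝ} (m : ℕ) (ha : 0 < a + m + 1) :
    (m + 1) * (Gamma (a + (m + 1 : ℕ) + 1) / (m + 1)!) =
      (a + m + 1) * (Gamma (a + m + 1) / m !) := by
  rw [Nat.cast_succ, ← add_assoc, Gamma_add_one ha.ne', Nat.factorial_succ, Nat.cast_mul,
    Nat.cast_succ]
  field_simp

theorem ascPochhammer_succ_eval_div_factorial (s : ℝ) (j : ℕ) :
    (j + 1) * ((ascPochhammer ℝ (j + 1)).eval s / (j + 1)!) =
      (s + j) * ((ascPochhammer ℝ j).eval s / j !) := by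
  rw [ascPochhammer_succ_eval, Nat.factorial_succ, Nat.cast_mul, Nat.cast_succ]
  field_simp

theorem ascPochhammer_eval_natCast_div_factorial {k : ℕ} (hk : 0 < k) (j : ℕ) :
    (ascPochhammer ℝ j).eval (k : ℝ) / j ! = (k + j - 1).choose (k - 1) := by
  rw [← ascPochhammer_eval_cast, ascPochhammer_nat_eq_ascFactorial,
    Nat.ascFactorial_eq_factorial_mul_choose',
    Nat.choose_symm_of_eq_add (show k + j - 1 = j + (k - 1) by omega), Nat.cast_mul]
  field_simp

section Orthogonal

variable {R : Type*} [CommRing R] (ℓ : R[X] →ₗ[R] R)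

theorem map_mul_eq_zero_of_degree_lt {P : ℕ → R[X]} (hmonic : ∀ n, (P n).Monic)
    (hdeg : ∀ n, (P n).natDegree = n) (horth : ∀ m n, m ≠ n → ℓ (P m * P n) = 0)
    {n : ℕ} {q : R[X]} (hq : q.degree < n) : ℓ (P n * q) = 0 := by
  suffices ∀ d ≤ n, ∀ q : R[X], q.degree < d → ℓ (P n * q) = 0 from this n le_rfl q hq
  intro d
  induction d with
  | zero =>
    intro _ q hq
    rw [show q = 0 from ext fun m => (degree_lt_iff_coeff_zero q 0).1 hq m m.zero_le,
      mul_zero, map_zero]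
  | succ d ih =>
    intro hd q hq
    have hlead : (P d).coeff d = 1 := by simpa [hdeg d] using (hmonic d).coeff_natDegree
    have hlower : (q - C (q.coeff d) * P d).degree < d := by
      refine (degree_lt_iff_coeff_zero _ d).2 fun m hm => ?_
      rcases hm.eq_or_lt with rfl | hm
      · simp [hlead]
      · rw [coeff_sub, coeff_C_mul, (degree_lt_iff_coeff_zero q (d + 1)).1 hq m hm,
          coeff_eq_zero_of_natDegree_lt (p := P d) (by rwa [hdeg]), mul_zero, sub_zero]
    have hsplit : P n * q = P n * (q - C (q.coeff d) * P d) + q.coeff d • (P n * P d) := by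
      rw [smul_eq_C_mul]; ring
    rw [hsplit, map_add, ih (by omega) _ hlower, map_smul, horth n d (by omega), smul_zero,
      add_zero]

theorem eq_of_monic_of_map_mul_eq_zero (hℓ : ∀ p, ℓ (p * p) = 0 → p = 0) {p q : R[X]} {n : ℕ}
    (hp : p.Monic) (hq : q.Monic) (hpn : p.natDegree = n) (hqn : q.natDegree = n)
    (hpo : ∀ r : R[X], r.degree < n → ℓ (p * r) = 0)
    (hqo : ∀ r : R[X], r.degree < n → ℓ (q * r) = 0) : p = q := by
  nontriviality R
  have hdiff : (p - q).degree < n := by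
    have h := degree_sub_lt_left
      (by rw [degree_eq_natDegree hp.ne_zero, degree_eq_natDegree hq.ne_zero, hpn, hqn])
      hp.ne_zero (hp.leadingCoeff.trans hq.leadingCoeff.symm)
    rwa [degree_eq_natDegree hp.ne_zero, hpn] at h
  refine sub_eq_zero.1 (hℓ _ ?_)
  rw [sub_mul, map_sub, hpo _ hdiff, hqo _ hdiff, sub_zero]

theorem map_sum_smul_sq {ι : Type*} {P : ι → R[X]} (horth : ∀ i j, i ≠ j → ℓ (P i * P j) = 0)
    (s : Finset ι) (c : ι → R) :
    ℓ ((∑ i ∈ s, c i • P i) ^ 2) = ∑ i ∈ s, c i ^ 2 * ℓ (P i ^ 2) := by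
  rw [sq, sum_mul_sum, map_sum]
  refine sum_congr rfl fun i hi => ?_
  rw [map_sum, sum_eq_single_of_mem i hi fun j _ hji => by
    rw [smul_mul_smul_comm, map_smul, horth i j hji.symm, smul_zero]]
  rw [smul_mul_smul_comm, map_smul, smul_eq_mul, sq, sq]

end Orthogonal

/-- `gammaMoment a p = ∫₀^∞ x^a e^{-x} p(x) dx` for `-1 < a`
(`integral_rpow_mul_exp_neg_mul_eval`), defined through the coefficients of `p` so that it is
linear by construction. -/
noncomputable def gammaMoment (a : ℝ) : ℝ[X] →ₗ[ℝ] ℝ :=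
  lsum fun n => Gamma (a + n + 1) • LinearMap.id

theorem gammaMoment_monomial (a c : ℝ) (n : ℕ) :
    gammaMoment a (monomial n c) = Gamma (a + n + 1) * c := by
  simp [gammaMoment, sum_monomial_index]

theorem gammaMoment_C_mul_X_pow (a c : ℝ) (n : ℕ) :
    gammaMoment a (C c * X ^ n) = c * Gamma (a + n + 1) := by
  rw [C_mul_X_pow_eq_monomial, gammaMoment_monomial, mul_comm]

/-- The right-hand side is the integrand of `Real.Gamma_eq_integral` at `a + n + 1`. -/
theorem rpow_mul_exp_neg_mul_eval_monomial {a x : ℝ} (hx : 0 < x) (n : ℕ) (c : ℝ) :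
    x ^ a * exp (-x) * (monomial n c).eval x = c * (exp (-x) * x ^ (a + n + 1 - 1)) := by
  rw [eval_monomial, add_sub_cancel_right, rpow_add hx, rpow_natCast]
  ring

theorem integrableOn_rpow_mul_exp_neg_mul_eval {a : ℝ} (ha : -1 < a) (p : ℝ[X]) :
    IntegrableOn (fun x => x ^ a * exp (-x) * p.eval x) (Set.Ioi 0) := by
  induction p using Polynomial.induction_on' with
  | add p q hp hq =>
    exact (hp.add hq).congr_fun (fun x _ => by simp only [Pi.add_apply, eval_add, mul_add])
      measurableSet_Ioi
  | monomial n c =>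
    have hs : 0 < a + n + 1 := by linarith [n.cast_nonneg (α := ℝ)]
    exact IntegrableOn.congr_fun ((GammaIntegral_convergent hs).const_mul c)
      (fun x hx => (rpow_mul_exp_neg_mul_eval_monomial hx n c).symm) measurableSet_Ioi

theorem integral_rpow_mul_exp_neg_mul_eval {a : ℝ} (ha : -1 < a) (p : ℝ[X]) :
    ∫ x in Set.Ioi 0, x ^ a * exp (-x) * p.eval x = gammaMoment a p := by
  induction p using Polynomial.induction_on' with
  | add p q hp hq =>
    simp only [eval_add, mul_add, map_add]
    rw [integral_add (integrableOn_rpow_mul_exp_neg_mul_eval ha p)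
      (integrableOn_rpow_mul_exp_neg_mul_eval ha q), hp, hq]
  | monomial n c =>
    have hs : 0 < a + n + 1 := by linarith [n.cast_nonneg (α := ℝ)]
    rw [setIntegral_congr_fun measurableSet_Ioi
      (fun x hx => rpow_mul_exp_neg_mul_eval_monomial hx n c), integral_const_mul,
      ← Gamma_eq_integral hs, gammaMoment_monomial, mul_comm]

theorem gammaMoment_mul_self_pos {a : ℝ} (ha : -1 < a) {p : ℝ[X]} (hp : p ≠ 0) :
    0 < gammaMoment a (p * p) := by
  have hnonneg : ∀ x ∈ Set.Ioi (0 : ℝ), 0 ≤ x ^ a * exp (-x) * (p * p).eval x := fun x hx => by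
    rw [eval_mul]
    exact mul_nonneg (by have := rpow_pos_of_pos (Set.mem_Ioi.1 hx) a; positivity)
      (mul_self_nonneg _)
  rw [← integral_rpow_mul_exp_neg_mul_eval ha, setIntegral_pos_iff_support_of_nonneg_ae
    ((ae_restrict_iff' measurableSet_Ioi).2 (Filter.Eventually.of_forall hnonneg))
    (integrableOn_rpow_mul_exp_neg_mul_eval ha _)]
  have hsub : Set.Ioi (0 : ℝ) \ {x | p.IsRoot x} ⊆
      Function.support (fun x => x ^ a * exp (-x) * (p * p).eval x) ∩ Set.Ioi 0 := by
    rintro x ⟨hx, hroot⟩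
    refine ⟨?_, hx⟩
    have := rpow_pos_of_pos (Set.mem_Ioi.1 hx) a
    simp only [Function.mem_support, eval_mul]
    exact mul_ne_zero (by positivity) (mul_self_ne_zero.2 hroot)
  refine lt_of_lt_of_le ?_ (measure_mono hsub)
  rw [measure_sdiff_null ((Polynomial.finite_setOfPred_isRoot hp).measure_zero _),
    Real.volume_Ioi]
  exact ENNReal.zero_lt_top

/-- The monic Laguerre polynomial `L^a_n`; the coefficient of `X ^ i` is
`(-1)^(n-i) C(n,i) Γ(a+n+1)/Γ(a+i+1)`. -/
noncomputable def monicLaguerre (a : ℝ) (n : ℕ) : ℝ[X] :=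
  ∑ i ∈ range (n + 1),
    C ((-1) ^ (n - i) * n.choose i * (ascPochhammer ℝ (n - i)).eval (a + i + 1)) * X ^ i

namespace monicLaguerre

theorem coeff (a : ℝ) (n i : ℕ) : (monicLaguerre a n).coeff i =
    (-1) ^ (n - i) * n.choose i * (ascPochhammer ℝ (n - i)).eval (a + i + 1) := by
  simp only [monicLaguerre, finsetSum_coeff, coeff_C_mul_X_pow, sum_ite_eq, mem_range]
  split_ifs with h
  · rfl
  · rw [Nat.choose_eq_zero_of_lt (by omega), Nat.cast_zero, mul_zero, zero_mul]

theorem coeff_self (a : ℝ) (n : ℕ) : (monicLaguerre a n).coeff n = 1 := by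
  simp [coeff]

theorem natDegree (a : ℝ) (n : ℕ) : (monicLaguerre a n).natDegree = n :=
  natDegree_eq_of_le_of_coeff_ne_zero
    (natDegree_le_iff_coeff_eq_zero.2 fun i hi => by
      rw [coeff, Nat.choose_eq_zero_of_lt (by exact_mod_cast hi), Nat.cast_zero, mul_zero,
        zero_mul])
    (by rw [coeff_self]; exact one_ne_zero)

theorem monic (a : ℝ) (n : ℕ) : (monicLaguerre a n).Monic := by
  rw [Monic, leadingCoeff, natDegree, coeff_self]

theorem add_eq_sum (a s : ℝ) (n : ℕ) :
    monicLaguerre (a + s) n = ∑ i ∈ range (n + 1),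
      ((-1) ^ (n - i) * n.choose i * (ascPochhammer ℝ (n - i)).eval s) • monicLaguerre a i := by
  ext r
  simp only [finsetSum_coeff, coeff_smul, smul_eq_mul, coeff]
  rcases lt_or_ge n r with hnr | hrn
  · rw [Nat.choose_eq_zero_of_lt hnr, Nat.cast_zero, mul_zero, zero_mul]
    refine (sum_eq_zero fun i hi => ?_).symm
    rw [Nat.choose_eq_zero_of_lt (n := i) (k := r) (by have := mem_range.1 hi; omega)]
    simp
  -- with `i = r + u` the coefficient of `X ^ r` is Chu–Vandermonde for `(a + r + 1) + s`
  obtain ⟨d, rfl⟩ := Nat.exists_eq_add_of_le hrn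
  rw [show r + d + 1 = r + (d + 1) by ring, sum_range_add, sum_eq_zero fun i hi => by
      rw [Nat.choose_eq_zero_of_lt (mem_range.1 hi), Nat.cast_zero, mul_zero, zero_mul, mul_zero],
    zero_add, show a + s + r + 1 = (a + r + 1) + s by ring, Nat.add_sub_cancel_left,
    ascPochhammer_eval_add, Nat.sum_antidiagonal_eq_sum_range_succ (fun i j => (d.choose i : ℝ) *
      ((ascPochhammer ℝ i).eval (a + r + 1) * (ascPochhammer ℝ j).eval s)), mul_sum]
  refine sum_congr rfl fun u hu => ?_
  rw [show r + d - (r + u) = d - u by omega, Nat.add_sub_cancel_left]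
  have hu : u ≤ d := Nat.lt_succ_iff.1 (mem_range.1 hu)
  have hchoose := Nat.choose_mul (n := r + d) (k := r + u) (s := r) (by omega)
  rw [Nat.add_sub_cancel_left, Nat.add_sub_cancel_left] at hchoose
  have hsign : ((-1 : ℝ) ^ (d - u)) * (-1) ^ u = (-1) ^ d := by
    rw [← pow_add, Nat.sub_add_cancel hu]
  rw [← hsign]
  have hchoose' : ((r + d).choose (r + u) : ℝ) * ((r + u).choose r) =
      (r + d).choose r * d.choose u := by exact_mod_cast hchoose
  linear_combination (-(-1 : ℝ) ^ (d - u) * (-1) ^ u * (ascPochhammer ℝ (d - u)).eval s *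
    (ascPochhammer ℝ u).eval (a + r + 1)) * hchoose'

variable {a : ℝ}

theorem gammaMoment_mul_X_pow (ha : -1 < a) {n r : ℕ} (hr : r ≤ n) :
    gammaMoment a (monicLaguerre a n * X ^ r) = if r = n then n ! * Gamma (a + n + 1) else 0 := by
  set Q := (ascPochhammer ℝ r).comp (X + C (a + 1))
  have hQ : Q.natDegree = r := by
    rw [natDegree_comp, ascPochhammer_natDegree, natDegree_X_add_C, mul_one]
  have hterm : ∀ i ∈ range (n + 1), gammaMoment a
      (C ((-1) ^ (n - i) * n.choose i * (ascPochhammer ℝ (n - i)).eval (a + i + 1)) * X ^ i *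
        X ^ r) = (-1) ^ (n - i) * n.choose i * Q.eval (i : ℝ) * Gamma (a + n + 1) := by
    intro i hi
    rw [mul_assoc, ← pow_add, gammaMoment_C_mul_X_pow]
    have hi : i ≤ n := Nat.lt_succ_iff.1 (mem_range.1 hi)
    have hpos : 0 < a + i + 1 := by linarith [i.cast_nonneg (α := ℝ)]
    have h1 := Gamma_add_nat_eq_mul_ascPochhammer hpos r
    have h2 := Gamma_add_nat_eq_mul_ascPochhammer hpos (n - i)
    rw [Nat.cast_sub hi, show a + i + 1 + (n - i : ℝ) = a + n + 1 by ring] at h2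
    rw [show a + (i + r : ℕ) + 1 = a + i + 1 + r by push_cast; ring, h1, h2]
    simp only [Q, eval_comp, eval_add, eval_X, eval_C]
    rw [show (i : ℝ) + (a + 1) = a + i + 1 by ring]
    ring
  rw [monicLaguerre, sum_mul, map_sum, sum_congr rfl hterm, ← sum_mul,
    sum_alternating_choose_mul_eval ((monic_ascPochhammer ℝ r).comp_X_add_C _) (hQ.trans_le hr),
    hQ]
  split_ifs <;> simp

theorem gammaMoment_mul (ha : -1 < a) {n : ℕ} {q : ℝ[X]} (hq : q.natDegree ≤ n) :
    gammaMoment a (monicLaguerre a n * q) = q.coeff n * (n ! * Gamma (a + n + 1)) := by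
  conv_lhs => rw [as_sum_range' q (n + 1) (Nat.lt_succ_of_le hq)]
  simp only [← C_mul_X_pow_eq_monomial, ← smul_eq_C_mul, mul_sum, mul_smul_comm, map_sum,
    map_smul, smul_eq_mul]
  rw [sum_congr rfl fun r hr => by
    rw [gammaMoment_mul_X_pow ha (Nat.lt_succ_iff.1 (mem_range.1 hr)), mul_ite, mul_zero]]
  rw [sum_ite_eq', if_pos (self_mem_range_succ n)]

theorem gammaMoment_mul_eq_zero (ha : -1 < a) {n : ℕ} {q : ℝ[X]} (hq : q.degree < n) :
    gammaMoment a (monicLaguerre a n * q) = 0 := by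
  rw [gammaMoment_mul ha (natDegree_le_of_degree_le hq.le),
    (degree_lt_iff_coeff_zero q n).1 hq n le_rfl, zero_mul]

theorem gammaMoment_sq (ha : -1 < a) (n : ℕ) :
    gammaMoment a (monicLaguerre a n ^ 2) = n ! * Gamma (a + n + 1) := by
  rw [sq, gammaMoment_mul ha (natDegree a n).le, coeff_self, one_mul]

theorem gammaMoment_mul_of_ne (ha : -1 < a) {m n : ℕ} (hmn : m ≠ n) :
    gammaMoment a (monicLaguerre a m * monicLaguerre a n) = 0 := by
  rcases hmn.lt_or_gt with h | h
  · rw [mul_comm]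
    exact gammaMoment_mul_eq_zero ha
      (by rw [degree_eq_natDegree (monic a m).ne_zero, natDegree]; exact_mod_cast h)
  · exact gammaMoment_mul_eq_zero ha
      (by rw [degree_eq_natDegree (monic a n).ne_zero, natDegree]; exact_mod_cast h)

theorem gammaMoment_add_sq (ha : -1 < a) (s : ℝ) (n : ℕ) :
    gammaMoment a (monicLaguerre (a + s) n ^ 2) = (n ! : ℝ) ^ 2 * ∑ j ∈ range (n + 1),
      ((ascPochhammer ℝ j).eval s / j !) ^ 2 * (Gamma (a + (n - j : ℕ) + 1) / (n - j : ℕ)!) := by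
  rw [add_eq_sum, map_sum_smul_sq _ fun i j => gammaMoment_mul_of_ne ha, mul_sum,
    ← sum_range_reflect]
  refine sum_congr rfl fun i hi => ?_
  have hi : i ≤ n := Nat.lt_succ_iff.1 (mem_range.1 hi)
  rw [gammaMoment_sq ha, Nat.add_sub_cancel, Nat.sub_sub_self hi]
  have hchoose : (n.choose i : ℝ) * i ! * (n - i)! = n ! := by
    exact_mod_cast Nat.choose_mul_factorial_mul_factorial hi
  field_simp
  rw [Nat.choose_symm hi, ← pow_mul, mul_comm i 2, pow_mul, neg_one_sq, one_pow, one_mul,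
    ← hchoose]
  ring

end monicLaguerre

theorem eq_monicLaguerre_of_orthogonal {b : ℝ} (hb : -1 < b) {L : ℕ → ℝ[X]}
    (hmonic : ∀ m, (L m).Monic) (hdeg : ∀ m, (L m).natDegree = m)
    (horth : ∀ m l, m ≠ l →
      ∫ x in Set.Ioi (0 : ℝ), x ^ b * exp (-x) * (L m).eval x * (L l).eval x = 0) (n : ℕ) :
    L n = monicLaguerre b n := by
  have horth' : ∀ m l, m ≠ l → gammaMoment b (L m * L l) = 0 := fun m l hml => by
    rw [← integral_rpow_mul_exp_neg_mul_eval hb]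
    refine Eq.trans ?_ (horth m l hml)
    simp only [eval_mul, mul_assoc]
  exact eq_of_monic_of_map_mul_eq_zero _
    (fun p hp => by_contra fun hne => (gammaMoment_mul_self_pos hb hne).ne' hp)
    (hmonic n) (monicLaguerre.monic b n) (hdeg n) (monicLaguerre.natDegree b n)
    (fun _ hr => map_mul_eq_zero_of_degree_lt _ hmonic hdeg horth' hr)
    (fun _ hr => monicLaguerre.gammaMoment_mul_eq_zero hb hr)

theorem integral_rpow_neg_mul_rpow_mul_exp_neg_mul_sum {a c : ℝ} (hac : -1 < a - c)
    (P : ℕ → ℝ[X]) (w : ℕ → ℝ) (s : Finset ℕ) :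
    ∫ x in Set.Ioi 0, x ^ (-c) * (x ^ a * exp (-x) * ∑ j ∈ s, (P j).eval x ^ 2 / w j) =
      ∑ j ∈ s, gammaMoment (a - c) (P j ^ 2) / w j := by
  have hfun : ∀ x ∈ Set.Ioi (0 : ℝ),
      x ^ (-c) * (x ^ a * exp (-x) * ∑ j ∈ s, (P j).eval x ^ 2 / w j) =
        x ^ (a - c) * exp (-x) * (∑ j ∈ s, (w j)⁻¹ • P j ^ 2).eval x := fun x hx => by
    rw [sub_eq_neg_add, rpow_add hx, eval_finsetSum]
    simp only [eval_smul, eval_pow, smul_eq_mul, div_eq_inv_mul]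
    ring
  rw [setIntegral_congr_fun measurableSet_Ioi hfun, integral_rpow_mul_exp_neg_mul_eval hac,
    map_sum]
  simp only [map_smul, smul_eq_mul, div_eq_inv_mul]

section Telescoping

variable {r G : ℕ → ℝ} {b k : ℝ}

theorem sum_telescope_of_recurrence (hr : ∀ j : ℕ, (j + 1) * r (j + 1) = (k + j) * r j)
    (hG : ∀ m : ℕ, (m + 1) * G (m + 1) = (b - k + m + 1) * G m) (n : ℕ) :
    (n + 1) * ∑ j ∈ range (n + 1), r (j + 1) * r j * G (n - j) =
      (b + n) * ∑ j ∈ range n, r (j + 1) * r j * G (n - 1 - j) +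
        k * ∑ j ∈ range (n + 1), r j ^ 2 * G (n - j) := by
  have hsplit : ∀ j : ℕ, (n + 1) * (r (j + 1) * r j * G (n - j)) =
      ((n : ℝ) - j) * r (j + 1) * r j * G (n - j) + j * r j ^ 2 * G (n - j) +
        k * (r j ^ 2 * G (n - j)) := fun j => by
    linear_combination (r j * G (n - j)) * hr j
  have hfirst : ∑ j ∈ range (n + 1), ((n : ℝ) - j) * r (j + 1) * r j * G (n - j) =
      ∑ j ∈ range n, (b - k + n - j) * (r (j + 1) * r j * G (n - 1 - j)) := by
    rw [sum_range_succ, sub_self, zero_mul, zero_mul, zero_mul, add_zero]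
    refine sum_congr rfl fun j hj => ?_
    have hj := mem_range.1 hj
    have hG' := hG (n - 1 - j)
    rw [show n - 1 - j + 1 = n - j by omega, Nat.cast_sub (by omega), Nat.cast_sub (by omega),
      Nat.cast_one] at hG'
    linear_combination (r (j + 1) * r j) * hG'
  have hsecond : ∑ j ∈ range (n + 1), (j : ℝ) * r j ^ 2 * G (n - j) =
      ∑ j ∈ range n, (k + j) * (r (j + 1) * r j * G (n - 1 - j)) := by
    rw [sum_range_succ', Nat.cast_zero, zero_mul, zero_mul, add_zero]
    refine sum_congr rfl fun j _ => ?_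
    rw [show n - (j + 1) = n - 1 - j by omega, Nat.cast_succ]
    linear_combination (r (j + 1) * G (n - 1 - j)) * hr j
  rw [mul_sum, sum_congr rfl fun j _ => hsplit j, sum_add_distrib, sum_add_distrib, hfirst,
    hsecond, ← sum_add_distrib, mul_sum, mul_sum]
  exact congrArg (· + _) (sum_congr rfl fun j _ => by ring)

theorem sum_factorial_div_Gamma_mul_sum (hr : ∀ j : ℕ, (j + 1) * r (j + 1) = (k + j) * r j)
    (hG : ∀ m : ℕ, (m + 1) * G (m + 1) = (b - k + m + 1) * G m) (hb : 0 < b) (hk : k ≠ 0)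
    (n : ℕ) :
    ∑ j ∈ range n, j ! / Gamma (b + j + 1) * ∑ i ∈ range (j + 1), r i ^ 2 * G (j - i) =
      n ! / (k * Gamma (b + n)) * ∑ j ∈ range n, r (j + 1) * r j * G (n - 1 - j) := by
  induction n with
  | zero => simp
  | succ n ih =>
    have hbn : 0 < b + n := by positivity
    have hGamma := Gamma_pos_of_pos hbn
    rw [sum_range_succ, ih, Nat.add_sub_cancel, Nat.factorial_succ, Nat.cast_mul, Nat.cast_succ,
      ← add_assoc, Gamma_add_one hbn.ne']
    field_simp
    exact (sum_telescope_of_recurrence hr hG n).symm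

end Telescoping

theorem lue_negative_moments_general (b : ℝ) (n k : ℕ) (hk : 0 < k) (hbk : (k : ℝ) < b)
    (L : ℕ → Polynomial ℝ)
    (hmonic : ∀ m : ℕ, (L m).Monic)
    (hdeg : ∀ m : ℕ, (L m).natDegree = m)
    (horth : ∀ m l : ℕ, m ≠ l →
      ∫ x in Set.Ioi (0 : ℝ),
        x ^ b * Real.exp (-x) * (L m).eval x * (L l).eval x = 0) :
    ∫ x in Set.Ioi (0 : ℝ), x ^ (-(k : ℝ)) *
        (x ^ b * Real.exp (-x) * ∑ j ∈ Finset.range n,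
          ((L j).eval x) ^ 2 / (Real.Gamma ((j : ℝ) + 1) * Real.Gamma (b + (j : ℝ) + 1))) =
      (1 / (k : ℝ)) * ∑ j ∈ Finset.range n,
        (Nat.choose (k + j) (k - 1) : ℝ) * (Nat.choose (k + j - 1) (k - 1) : ℝ) *
          (Real.Gamma (b + (n : ℝ) - (k : ℝ) - (j : ℝ)) / Real.Gamma (b + (n : ℝ))) *
          (Real.Gamma ((n : ℝ) + 1) / Real.Gamma ((n : ℝ) - (j : ℝ))) := by
  have hk1 : (1 : ℝ) ≤ k := by exact_mod_cast hk
  have hbk' : -1 < b - k := by linarith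
  set r : ℕ → ℝ := fun j => (ascPochhammer ℝ j).eval (k : ℝ) / (j ! : ℝ)
  set G : ℕ → ℝ := fun m => Gamma (b - k + m + 1) / (m ! : ℝ)
  have hterm : ∀ j : ℕ, gammaMoment (b - k) (L j ^ 2) / (Gamma (j + 1) * Gamma (b + j + 1)) =
      j ! / Gamma (b + j + 1) * ∑ i ∈ range (j + 1), r i ^ 2 * G (j - i) := fun j => by
    have hsq := monicLaguerre.gammaMoment_add_sq hbk' k j
    rw [sub_add_cancel, ← eq_monicLaguerre_of_orthogonal (by linarith) hmonic hdeg horth j] at hsq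
    rw [hsq, Gamma_nat_eq_factorial]
    simp only [r, G]
    field_simp
  rw [integral_rpow_neg_mul_rpow_mul_exp_neg_mul_sum (by simpa using hbk') L,
    sum_congr rfl fun j _ => hterm j,
    sum_factorial_div_Gamma_mul_sum (ascPochhammer_succ_eval_div_factorial k)
      (fun m => Gamma_succ_div_factorial m (by linarith [m.cast_nonneg (α := ℝ)]))
      (by linarith) (by positivity), mul_sum, mul_sum]
  refine sum_congr rfl fun j hj => ?_
  have hj := mem_range.1 hj
  simp only [r, G, ascPochhammer_eval_natCast_div_factorial hk,
    show k + (j + 1) - 1 = k + j by omega]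
  rw [← Gamma_nat_eq_factorial, ← Gamma_nat_eq_factorial, Nat.cast_sub (by omega),
    Nat.cast_sub (by omega), Nat.cast_one,
    show b - k + (n - 1 - j : ℝ) + 1 = b + n - k - j by ring,
    show ((n : ℝ) - 1 - j) + 1 = n - j by ring]
  field_simp

/-- The negative moments of the `n`-dimensional Laguerre Unitary Ensemble with
parameter `b`: for a positive integer `k < n+1` with `b > k`,
`M(-k,n) = (1/k) ∑_{j=0}^{n-1} C(k+j,k-1) C(k+j-1,k-1) (b+n)_{(-k-j)}/(n+1)_{(-j-1)}`,
with `(a)_{(m)} = Γ(a+m)/Γ(a)`. -/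
theorem lue_negative_moments (b : ℝ) (n k : ℕ) (hn : 0 < n) (hk : 0 < k)
    (hkn : k < n + 1) (hbk : (k : ℝ) < b)
    (L : ℕ → Polynomial ℝ)
    (hmonic : ∀ m : ℕ, (L m).Monic)
    (hdeg : ∀ m : ℕ, (L m).natDegree = m)
    (horth : ∀ m l : ℕ, m ≠ l →
      ∫ x in Set.Ioi (0 : ℝ),
        x ^ b * Real.exp (-x) * (L m).eval x * (L l).eval x = 0)
    (hnorm : ∀ j : ℕ,
      ∫ x in Set.Ioi (0 : ℝ), x ^ b * Real.exp (-x) * ((L j).eval x) ^ 2 =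
        Real.Gamma ((j : ℝ) + 1) * Real.Gamma (b + (j : ℝ) + 1)) :
    ∫ x in Set.Ioi (0 : ℝ), x ^ (-(k : ℝ)) *
        (x ^ b * Real.exp (-x) * ∑ j ∈ Finset.range n,
          ((L j).eval x) ^ 2 / (Real.Gamma ((j : ℝ) + 1) * Real.Gamma (b + (j : ℝ) + 1))) =
      (1 / (k : ℝ)) * ∑ j ∈ Finset.range n,
        (Nat.choose (k + j) (k - 1) : ℝ) * (Nat.choose (k + j - 1) (k - 1) : ℝ) *
          (Real.Gamma (b + (n : ℝ) - (k : ℝ) - (j : ℝ)) / Real.Gamma (b + (n : ℝ))) *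
          (Real.Gamma ((n : ℝ) + 1) / Real.Gamma ((n : ℝ) - (j : ℝ))) :=
  lue_negative_moments_general b n k hk hbk L hmonic hdeg horth
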